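/- (Schmidt–Eckart–Young, optimality) With the notation above, for every matrix B ∈ ℝ^{m×n} with rank(B) ≤ k one has ‖S − B‖_F ≥ sqrt(Σ_{i=k+1}^r σ_i²); hence S_k minimizes the Frobenius-norm distance to S among matrices of rank at most k. -/

import Mathlib

section EY
open Matrix

private lemma frob_trace {m n : ℕ} (M : Matrix (Fin m) (Fin n) ℝ) :
    ∑ p, ∑ q, M p q ^ 2 = (Mᵀ * M).trace := by
  rw [Finset.sum_comm]
  simp [Matrix.trace, Matrix.mul_apply, Matrix.diag, sq]

private lemma frob_conj {m n : ℕ} (W : Matrix (Fin m) (Fin m) ℝ) (Z : Matrix (Fin n) (Fin n) ℝ)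
    (hW : Wᵀ * W = 1) (hZ : Zᵀ * Z = 1) (A : Matrix (Fin m) (Fin n) ℝ) :
    ∑ p, ∑ q, (W * A * Zᵀ) p q ^ 2 = ∑ p, ∑ q, A p q ^ 2 := by
  rw [frob_trace, frob_trace]
  have h1 : (W * A * Zᵀ)ᵀ * (W * A * Zᵀ) = Z * ((Aᵀ * A) * Zᵀ) := by
    calc (W * A * Zᵀ)ᵀ * (W * A * Zᵀ) = Z * (Aᵀ * ((Wᵀ * W) * (A * Zᵀ))) := by
          simp only [Matrix.transpose_mul, Matrix.transpose_transpose, Matrix.mul_assoc]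
      _ = Z * ((Aᵀ * A) * Zᵀ) := by rw [hW, Matrix.one_mul, Matrix.mul_assoc]
  rw [h1, Matrix.trace_mul_comm, Matrix.mul_assoc, hZ, Matrix.mul_one]

private lemma abel_key (n r k : ℕ) (hkr : k < r) (hrn : r ≤ n)
    (σ c : ℕ → ℝ)
    (hσpos : ∀ i, i < r → 0 < σ i)
    (hσmono : ∀ i j, i ≤ j → j < r → σ j ≤ σ i)
    (hc0 : ∀ i, 0 ≤ c i) (hc1 : ∀ i, c i ≤ 1)
    (hcsum : (n : ℝ) - k ≤ ∑ i ∈ Finset.range n, c i) :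
    ∑ i ∈ Finset.Ico k r, σ i ^ 2 ≤ ∑ i ∈ Finset.range r, σ i ^ 2 * c i := by
  have hσk : 0 < σ k := hσpos k hkr
  have hsq : ∀ i j, i ≤ j → j < r → σ j ^ 2 ≤ σ i ^ 2 := by
    intro i j hij hjr
    have h1 := hσmono i j hij hjr
    have h2 := (hσpos j hjr).le
    nlinarith
  -- split range r into range k and Ico k r
  have hsplit : Finset.range r = Finset.range k ∪ Finset.Ico k r := by
    ext i; simp [Finset.mem_Ico, Finset.mem_range]; omega
  have hdisj : Disjoint (Finset.range k) (Finset.Ico k r) := by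
    simp [Finset.disjoint_left, Finset.mem_Ico]; omega
  rw [hsplit, Finset.sum_union hdisj]
  -- suffices: ∑_{Ico k r} σ i ^2 (1 - c i) ≤ ∑_{range k} σ i^2 c i
  have key : ∑ i ∈ Finset.Ico k r, σ i ^ 2 * (1 - c i) ≤
      ∑ i ∈ Finset.range k, σ i ^ 2 * c i := by
    have s1 : ∑ i ∈ Finset.Ico k r, σ i ^ 2 * (1 - c i) ≤
        ∑ i ∈ Finset.Ico k r, σ k ^ 2 * (1 - c i) := by
      apply Finset.sum_le_sum
      intro i hi
      rw [Finset.mem_Ico] at hi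
      have := hsq k i hi.1 hi.2
      have := hc1 i
      nlinarith
    have s2 : ∑ i ∈ Finset.Ico k r, σ k ^ 2 * (1 - c i) ≤
        ∑ i ∈ Finset.Ico k n, σ k ^ 2 * (1 - c i) := by
      apply Finset.sum_le_sum_of_subset_of_nonneg
      · apply Finset.Ico_subset_Ico le_rfl hrn
      · intro i _ _
        have := hc1 i; nlinarith
    have s3 : ∑ i ∈ Finset.Ico k n, σ k ^ 2 * (1 - c i) ≤
        ∑ i ∈ Finset.range k, σ k ^ 2 * c i := by
      rw [← Finset.mul_sum, ← Finset.mul_sum]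
      apply mul_le_mul_of_nonneg_left _ (by positivity)
      have hsplit2 : Finset.range n = Finset.range k ∪ Finset.Ico k n := by
        ext i; simp [Finset.mem_Ico, Finset.mem_range]; omega
      have hdisj2 : Disjoint (Finset.range k) (Finset.Ico k n) := by
        simp [Finset.disjoint_left, Finset.mem_Ico]; omega
      rw [hsplit2, Finset.sum_union hdisj2] at hcsum
      have hcard : (Finset.Ico k n).card = n - k := Nat.card_Ico k n
      have : ∑ i ∈ Finset.Ico k n, (1 - c i) = ((n - k : ℕ) : ℝ) - ∑ i ∈ Finset.Ico k n, c i := by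
        rw [Finset.sum_sub_distrib, Finset.sum_const, ← hcard]; simp
      rw [this]
      have hkn : k ≤ n := hkr.le.trans hrn
      have : ((n - k : ℕ) : ℝ) = (n : ℝ) - k := by
        rw [Nat.cast_sub hkn]
      linarith
    have s4 : ∑ i ∈ Finset.range k, σ k ^ 2 * c i ≤
        ∑ i ∈ Finset.range k, σ i ^ 2 * c i := by
      apply Finset.sum_le_sum
      intro i hi
      rw [Finset.mem_range] at hi
      exact mul_le_mul_of_nonneg_right (hsq i k hi.le hkr) (hc0 i)
    linarith
  have expand : ∑ i ∈ Finset.Ico k r, σ i ^ 2 * (1 - c i) =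
      ∑ i ∈ Finset.Ico k r, σ i ^ 2 - ∑ i ∈ Finset.Ico k r, σ i ^ 2 * c i := by
    rw [← Finset.sum_sub_distrib]; congr 1; ext i; ring
  linarith [expand ▸ key]

private lemma normsq_eq {n : ℕ} (x : EuclideanSpace ℝ (Fin n)) :
    ∑ q, x q ^ 2 = ‖x‖ ^ 2 := by
  rw [EuclideanSpace.norm_eq, Real.sq_sqrt (by positivity)]
  simp [Real.norm_eq_abs, sq_abs]

private lemma key_ineq {m n : ℕ} (r k : ℕ) (σ : ℕ → ℝ)
    (hσpos : ∀ i, i < r → 0 < σ i)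
    (hσmono : ∀ i j, i ≤ j → j < r → σ j ≤ σ i)
    (hrm : r ≤ m) (hrn : r ≤ n) (hkr : k ≤ r)
    (C : Matrix (Fin m) (Fin n) ℝ) (hC : C.rank ≤ k) :
    ∑ i ∈ Finset.Ico k r, σ i ^ 2 ≤
      ∑ p, ∑ q, ((Matrix.of fun (i : Fin m) (j : Fin n) =>
        if (i : ℕ) = (j : ℕ) ∧ (i : ℕ) < r then σ (i : ℕ) else 0) - C) p q ^ 2 := by
  rcases eq_or_lt_of_le hkr with hkr' | hkr'
  · subst hkr'; simp only [Finset.Ico_self, Finset.sum_empty]; positivity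
  set D : Matrix (Fin m) (Fin n) ℝ := Matrix.of fun (i : Fin m) (j : Fin n) =>
    if (i : ℕ) = (j : ℕ) ∧ (i : ℕ) < r then σ (i : ℕ) else 0 with hD
  set M := D - C with hM
  -- kernel setup
  set L : EuclideanSpace ℝ (Fin n) →ₗ[ℝ] (Fin m → ℝ) :=
    C.mulVecLin ∘ₗ (WithLp.linearEquiv 2 ℝ (Fin n → ℝ)).toLinearMap with hL
  set K := LinearMap.ker L with hK
  set d := Module.finrank ℝ K with hd
  have hrank : Module.finrank ℝ (LinearMap.range L) = C.rank := by
    rw [hL, LinearMap.range_comp_of_range_eq_top _ (LinearEquiv.range _)]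
    rfl
  have hrnk : n = C.rank + d := by
    have := LinearMap.finrank_range_add_finrank_ker L
    rw [hrank] at this
    simpa using this.symm
  have hdk : n ≤ d + k := by omega
  let bK := stdOrthonormalBasis ℝ K
  set v : Fin d → EuclideanSpace ℝ (Fin n) := fun j => (bK j : EuclideanSpace ℝ (Fin n)) with hvdef
  have hv : Orthonormal ℝ v := bK.orthonormal.comp_linearIsometry K.subtypeₗᵢ
  have hker : ∀ j, C.mulVec (v j) = 0 := by
    intro j
    have : v j ∈ K := (bK j).2
    rw [hK, LinearMap.mem_ker] at this
    exact this
  -- weights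
  set w : Fin d → ℕ → ℝ := fun j i => if h : i < n then v j ⟨i, h⟩ else 0 with hw
  set c : ℕ → ℝ := fun i => ∑ j, (w j i) ^ 2 with hc
  have hwq : ∀ j (q : Fin n), w j (q : ℕ) = v j q := by
    intro j q
    rw [hw]; dsimp only; rw [dif_pos q.isLt]
  have hc0 : ∀ i, 0 ≤ c i := by intro i; positivity
  have hc1 : ∀ i, c i ≤ 1 := by
    intro i
    by_cases h : i < n
    · have hb := hv.sum_inner_products_le (EuclideanSpace.single (⟨i, h⟩ : Fin n) (1 : ℝ))
        (s := Finset.univ)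
      rw [EuclideanSpace.norm_single] at hb
      simp only [EuclideanSpace.inner_single_right, _root_.map_one, one_mul, norm_one,
        Real.norm_eq_abs, sq_abs, one_pow, starRingEnd_apply, star_trivial] at hb
      rw [hc]; dsimp only
      calc ∑ j, w j i ^ 2 = ∑ j, (v j ⟨i, h⟩) ^ 2 := by
            apply Finset.sum_congr rfl; intro j _; rw [hw]; dsimp only; rw [dif_pos h]
        _ ≤ 1 := hb
    · rw [hc]; dsimp only
      have : ∀ j : Fin d, w j i ^ 2 = 0 := by
        intro j; rw [hw]; dsimp only; rw [dif_neg h]; ring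
      simp [this]
  have hnormv : ∀ j, ∑ q, (v j q) ^ 2 = 1 := by
    intro j
    rw [normsq_eq, hv.1 j, one_pow]
  have hcsum : (n : ℝ) - k ≤ ∑ i ∈ Finset.range n, c i := by
    have hsum : ∑ i ∈ Finset.range n, c i = d := by
      rw [hc]
      rw [Finset.sum_comm]
      have h1 : ∀ j : Fin d, ∑ i ∈ Finset.range n, w j i ^ 2 = 1 := by
        intro j
        rw [← Fin.sum_univ_eq_sum_range (fun i => w j i ^ 2) n, ← hnormv j]
        exact Finset.sum_congr rfl fun q _ => by rw [hwq]
      simp [h1]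
    rw [hsum]
    have : (n : ℝ) ≤ (d : ℝ) + (k : ℝ) := by exact_mod_cast hdk
    linarith
  -- D applied to kernel vectors
  have hDv : ∀ j (p : Fin m), D.mulVec (v j) p = if (p : ℕ) < r then σ p * w j p else 0 := by
    intro j p
    by_cases hp : (p : ℕ) < r
    · rw [if_pos hp]
      have hpn : (p : ℕ) < n := hp.trans_le hrn
      rw [Matrix.mulVec, dotProduct]
      rw [Finset.sum_eq_single (⟨(p : ℕ), hpn⟩ : Fin n)]
      · rw [hD]
        simp only [Matrix.of_apply, Fin.val_mk, eq_self_iff_true, true_and]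
        rw [if_pos hp, hw]
        dsimp only
        rw [dif_pos hpn]
      · intro q _ hq
        rw [hD]
        simp only [Matrix.of_apply]
        rw [if_neg, zero_mul]
        rintro ⟨h1, -⟩
        exact hq (by ext; exact h1.symm)
      · intro h; exact absurd (Finset.mem_univ _) h
    · rw [if_neg hp]
      rw [Matrix.mulVec, dotProduct]
      apply Finset.sum_eq_zero
      intro q _
      rw [hD]
      simp only [Matrix.of_apply]
      rw [if_neg, zero_mul]
      rintro ⟨-, h2⟩
      exact hp h2
  -- M on kernel vectors equals D on kernel vectors
  have hMv : ∀ j, M.mulVec (v j) = D.mulVec (v j) := by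
    intro j
    rw [hM, Matrix.sub_mulVec, hker j, sub_zero]
  -- Bessel step: sum over kernel vectors bounded by Frobenius norm
  have step1 : ∑ j, ∑ p, (M.mulVec (v j) p) ^ 2 ≤ ∑ p, ∑ q, M p q ^ 2 := by
    rw [Finset.sum_comm]
    apply Finset.sum_le_sum
    intro p _
    set x : EuclideanSpace ℝ (Fin n) := WithLp.toLp 2 (fun q => M p q : Fin n → ℝ) with hx
    have hb := hv.sum_inner_products_le x (s := Finset.univ)
    have h1 : ∀ j, M.mulVec (v j) p = inner ℝ (v j) x := by
      intro j
      rw [Matrix.mulVec, dotProduct, PiLp.inner_apply]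
      simp only [RCLike.inner_apply, starRingEnd_apply, star_trivial]
      exact Finset.sum_congr rfl fun q _ => rfl
    calc ∑ j, (M.mulVec (v j) p) ^ 2 = ∑ j, ‖(inner ℝ (v j) x : ℝ)‖ ^ 2 := by
          apply Finset.sum_congr rfl
          intro j _
          rw [h1 j, Real.norm_eq_abs, sq_abs]
      _ ≤ ‖x‖ ^ 2 := hb
      _ = ∑ q, M p q ^ 2 := by rw [← normsq_eq]
  -- compute the D-sum
  have step3 : ∑ j, ∑ p, (D.mulVec (v j) p) ^ 2 = ∑ i ∈ Finset.range r, σ i ^ 2 * c i := by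
    have h2 : ∀ j, ∑ p : Fin m, (D.mulVec (v j) p) ^ 2
        = ∑ i ∈ Finset.range r, σ i ^ 2 * w j i ^ 2 := by
      intro j
      have h3 : ∑ p : Fin m, (D.mulVec (v j) p) ^ 2
          = ∑ i ∈ Finset.range m, (if i < r then σ i * w j i else 0) ^ 2 := by
        rw [← Fin.sum_univ_eq_sum_range (fun i => (if i < r then σ i * w j i else 0) ^ 2) m]
        exact Finset.sum_congr rfl fun p _ => by rw [hDv j p]
      rw [h3]
      rw [← Finset.sum_subset (Finset.range_subset_range.mpr hrm)]
      · apply Finset.sum_congr rfl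
        intro i hi
        rw [Finset.mem_range] at hi
        rw [if_pos hi]
        ring
      · intro i _ hi
        rw [Finset.mem_range] at hi
        rw [if_neg hi]
        ring
    calc ∑ j, ∑ p, (D.mulVec (v j) p) ^ 2
        = ∑ j, ∑ i ∈ Finset.range r, σ i ^ 2 * w j i ^ 2 := Finset.sum_congr rfl fun j _ => h2 j
      _ = ∑ i ∈ Finset.range r, ∑ j, σ i ^ 2 * w j i ^ 2 := by rw [Finset.sum_comm]
      _ = ∑ i ∈ Finset.range r, σ i ^ 2 * c i := by
          apply Finset.sum_congr rfl
          intro i _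
          rw [hc, ← Finset.mul_sum]
  -- Abel summation
  have habel : ∑ i ∈ Finset.Ico k r, σ i ^ 2 ≤ ∑ i ∈ Finset.range r, σ i ^ 2 * c i :=
    abel_key n r k hkr' hrn σ c hσpos hσmono hc0 hc1 hcsum
  calc ∑ i ∈ Finset.Ico k r, σ i ^ 2 ≤ ∑ i ∈ Finset.range r, σ i ^ 2 * c i := habel
    _ = ∑ j, ∑ p, (D.mulVec (v j) p) ^ 2 := step3.symm
    _ = ∑ j, ∑ p, (M.mulVec (v j) p) ^ 2 := by
        apply Finset.sum_congr rfl; intro j _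
        apply Finset.sum_congr rfl; intro p _
        rw [hMv j]
    _ ≤ ∑ p, ∑ q, M p q ^ 2 := step1
end EY



open Matrix in
/-- Schmidt–Eckart–Young optimality of the truncated SVD in the Frobenius norm. -/
theorem stmt_4 (m n r : ℕ) (S : Matrix (Fin m) (Fin n) ℝ)
    (W : Matrix (Fin m) (Fin m) ℝ) (Z : Matrix (Fin n) (Fin n) ℝ)
    (hW : Wᵀ * W = 1) (hW' : W * Wᵀ = 1)
    (hZ : Zᵀ * Z = 1) (hZ' : Z * Zᵀ = 1)
    (σ : ℕ → ℝ)
    (hr : S.rank = r)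
    (hσpos : ∀ i, i < r → 0 < σ i)
    (hσmono : ∀ i j, i ≤ j → j < r → σ j ≤ σ i)
    (hSVD : S = W * (Matrix.of fun (i : Fin m) (j : Fin n) =>
      if (i : ℕ) = (j : ℕ) ∧ (i : ℕ) < r then σ (i : ℕ) else 0) * Zᵀ)
    (k : ℕ) (hk1 : 1 ≤ k) (hkr : k ≤ r)
    (Sk : Matrix (Fin m) (Fin n) ℝ)
    (hSk : Sk = W * (Matrix.of fun (i : Fin m) (j : Fin n) =>
      if (i : ℕ) = (j : ℕ) ∧ (i : ℕ) < k then σ (i : ℕ) else 0) * Zᵀ) :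
    (∀ B : Matrix (Fin m) (Fin n) ℝ, B.rank ≤ k →
      Real.sqrt (∑ i ∈ Finset.Ico k r, σ i ^ 2) ≤
        Real.sqrt (∑ p, ∑ q, (S - B) p q ^ 2)) ∧
    (∀ B : Matrix (Fin m) (Fin n) ℝ, B.rank ≤ k →
      Real.sqrt (∑ p, ∑ q, (S - Sk) p q ^ 2) ≤
        Real.sqrt (∑ p, ∑ q, (S - B) p q ^ 2)) := by
  have hdetW : IsUnit W.det := by
    have h := congrArg Matrix.det hW
    rw [Matrix.det_mul, Matrix.det_transpose, Matrix.det_one] at h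
    exact IsUnit.of_mul_eq_one _ h
  have hdetWT : IsUnit Wᵀ.det := by rwa [Matrix.det_transpose]
  have hdetZ : IsUnit Z.det := by
    have h := congrArg Matrix.det hZ
    rw [Matrix.det_mul, Matrix.det_transpose, Matrix.det_one] at h
    exact IsUnit.of_mul_eq_one _ h
  have hrm : r ≤ m := hr ▸ S.rank_le_height
  have hrn : r ≤ n := hr ▸ S.rank_le_width
  set D : Matrix (Fin m) (Fin n) ℝ := Matrix.of fun (i : Fin m) (j : Fin n) =>
    if (i : ℕ) = (j : ℕ) ∧ (i : ℕ) < r then σ (i : ℕ) else 0 with hD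
  set Dk : Matrix (Fin m) (Fin n) ℝ := Matrix.of fun (i : Fin m) (j : Fin n) =>
    if (i : ℕ) = (j : ℕ) ∧ (i : ℕ) < k then σ (i : ℕ) else 0 with hDk
  have main : ∀ B : Matrix (Fin m) (Fin n) ℝ, B.rank ≤ k →
      ∑ i ∈ Finset.Ico k r, σ i ^ 2 ≤ ∑ p, ∑ q, (S - B) p q ^ 2 := by
    intro B hB
    set C := Wᵀ * B * Z with hC
    have hCrank : C.rank ≤ k := by
      rw [hC, Matrix.rank_mul_eq_left_of_isUnit_det _ _ hdetZ,
        Matrix.rank_mul_eq_right_of_isUnit_det _ _ hdetWT]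
      exact hB
    have hfactor : S - B = W * (D - C) * Zᵀ := by
      have hB' : W * (Wᵀ * B * Z) * Zᵀ = B := by
        calc W * (Wᵀ * B * Z) * Zᵀ = W * (Wᵀ * (B * (Z * Zᵀ))) := by
              simp only [Matrix.mul_assoc]
          _ = B := by
              rw [hZ', Matrix.mul_one, ← Matrix.mul_assoc, hW', Matrix.one_mul]
      rw [hSVD, hC, Matrix.mul_sub, Matrix.sub_mul, hB']
    rw [hfactor, frob_conj W Z hW hZ]
    exact key_ineq r k σ hσpos hσmono hrm hrn hkr C hCrank
  refine ⟨fun B hB => Real.sqrt_le_sqrt (main B hB), fun B hB => ?_⟩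
  have heq : ∑ p, ∑ q, (S - Sk) p q ^ 2 = ∑ i ∈ Finset.Ico k r, σ i ^ 2 := by
    have hfactor : S - Sk = W * (D - Dk) * Zᵀ := by
      rw [hSVD, hSk, ← Matrix.sub_mul, ← Matrix.mul_sub]
    rw [hfactor, frob_conj W Z hW hZ]
    have hentry : ∀ (p : Fin m) (q : Fin n), (D - Dk) p q =
        if (p : ℕ) = (q : ℕ) ∧ k ≤ (p : ℕ) ∧ (p : ℕ) < r then σ (p : ℕ) else 0 := by
      intro p q
      rw [hD, hDk]
      simp only [Matrix.sub_apply, Matrix.of_apply]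
      by_cases h1 : (p : ℕ) = (q : ℕ)
      · by_cases h2 : (p : ℕ) < k
        · rw [if_pos ⟨h1, h2.trans_le hkr⟩, if_pos ⟨h1, h2⟩, if_neg (by omega), sub_self]
        · by_cases h3 : (p : ℕ) < r
          · rw [if_pos ⟨h1, h3⟩, if_neg (by tauto), if_pos ⟨h1, by omega, h3⟩, sub_zero]
          · rw [if_neg (by tauto), if_neg (by tauto), if_neg (by tauto), sub_self]
      · rw [if_neg (by tauto), if_neg (by tauto), if_neg (by tauto), sub_self]
    have hrow : ∀ p : Fin m, ∑ q, ((D - Dk) p q) ^ 2 =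
        if k ≤ (p : ℕ) ∧ (p : ℕ) < r then σ (p : ℕ) ^ 2 else 0 := by
      intro p
      by_cases hp : k ≤ (p : ℕ) ∧ (p : ℕ) < r
      · rw [if_pos hp]
        have hpn : (p : ℕ) < n := hp.2.trans_le hrn
        rw [Finset.sum_eq_single (⟨(p : ℕ), hpn⟩ : Fin n)]
        · rw [hentry]
          simp only [Fin.val_mk, eq_self_iff_true, true_and]
          rw [if_pos hp]
        · intro q _ hq
          rw [hentry, if_neg, zero_pow two_ne_zero]
          rintro ⟨h1, -⟩
          exact hq (by ext; exact h1.symm)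
        · intro h; exact absurd (Finset.mem_univ _) h
      · rw [if_neg hp]
        apply Finset.sum_eq_zero
        intro q _
        rw [hentry, if_neg, zero_pow two_ne_zero]
        tauto
    calc ∑ p, ∑ q, ((D - Dk) p q) ^ 2
        = ∑ p : Fin m, if k ≤ (p : ℕ) ∧ (p : ℕ) < r then σ (p : ℕ) ^ 2 else 0 :=
          Finset.sum_congr rfl fun p _ => hrow p
      _ = ∑ i ∈ Finset.range m, if k ≤ i ∧ i < r then σ i ^ 2 else 0 :=
          Fin.sum_univ_eq_sum_range (fun i => if k ≤ i ∧ i < r then σ i ^ 2 else 0) m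
      _ = ∑ i ∈ Finset.range m, if i ∈ Finset.Ico k r then σ i ^ 2 else 0 := by
          apply Finset.sum_congr rfl
          intro i _
          simp [Finset.mem_Ico]
      _ = ∑ i ∈ Finset.range m ∩ Finset.Ico k r, σ i ^ 2 := by
          rw [Finset.sum_ite_mem]
      _ = ∑ i ∈ Finset.Ico k r, σ i ^ 2 := by
          congr 1
          rw [Finset.inter_eq_right]
          intro i hi
          rw [Finset.mem_Ico] at hi
          rw [Finset.mem_range]
          omega
  rw [heq]
  exact Real.sqrt_le_sqrt (main B hB)
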